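/- The soundness translation respects the equivalence of sequent derivations: for all cut-free sequent derivations f, g of S ∣ Γ ⟶ C, if f ◦≐ g then sound f ≐ sound g in the categorical calculus. -/

import Mathlib

set_option linter.unusedVariables false
inductive Fma (V : Type) : Type
  | var : V → Fma V
  | unit : Fma V
  | tens : Fma V → Fma V → Fma V

abbrev Stp (V : Type) := Option (Fma V)

def stpF {V : Type} : Stp V → Fma V
  | none => Fma.unit
  | some A => A

def semF {V : Type} : Fma V → List (Fma V) → Fma V
  | A, [] => A
  | A, B :: Γ => semF (A.tens B) Γ

abbrev sem {V : Type} (S : Stp V) (Γ : List (Fma V)) : Fma V := semF (stpF S) Γ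

theorem semF_append {V : Type} (A : Fma V) (Γ Δ : List (Fma V)) :
    semF A (Γ ++ Δ) = semF (semF A Γ) Δ := by
  induction Γ generalizing A with
  | nil => rfl
  | cons B Γ ih => exact ih _

/-- The categorical calculus: derivations A ⟶ C of the free skew monoidal category. -/
inductive Der {V : Type} : Fma V → Fma V → Type
  | id : Der A A
  | comp : Der B C → Der A B → Der A C
  | tens : Der A C → Der B D → Der (Fma.tens A B) (Fma.tens C D)
  | lam : Der (Fma.tens Fma.unit A) A
  | rho : Der A (Fma.tens A Fma.unit)
  | alpha : Der (Fma.tens (Fma.tens A B) C) (Fma.tens A (Fma.tens B C))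

/-- The cut-free skew monoidal sequent calculus. -/
inductive CF {V : Type} : Stp V → List (Fma V) → Fma V → Type
  | ax : CF (some A) [] A
  | uf : CF (some A) Γ C → CF none (A :: Γ) C
  | Il : CF none Γ C → CF (some Fma.unit) Γ C
  | Ir : CF none [] Fma.unit
  | tl : CF (some A) (B :: Γ) C → CF (some (Fma.tens A B)) Γ C
  | tr : CF S Γ A → CF none Δ B → CF S (Γ ++ Δ) (Fma.tens A B)

def actDer {V : Type} {A B : Fma V} (f : Der A B) : (Γ : List (Fma V)) → Der (semF A Γ) (semF B Γ)
  | [] => f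
  | C :: Γ => actDer (f.tens Der.id) Γ

def psi {V : Type} (A B : Fma V) : (Γ : List (Fma V)) → Der (semF (Fma.tens A B) Γ) (Fma.tens A (semF B Γ))
  | [] => Der.id
  | C :: Γ => (psi A (Fma.tens B C) Γ).comp (actDer Der.alpha Γ)

def phiF {V : Type} (A : Fma V) : (Γ : List (Fma V)) → (Δ : List (Fma V)) →
    Der (semF A (Γ ++ Δ)) (Fma.tens (semF A Γ) (semF Fma.unit Δ))
  | [], Δ => (psi A Fma.unit Δ).comp (actDer Der.rho Δ)
  | C :: Γ, Δ => phiF (Fma.tens A C) Γ Δ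

def phi {V : Type} (S : Stp V) (Γ Δ : List (Fma V)) :
    Der (sem S (Γ ++ Δ)) (Fma.tens (sem S Γ) (sem none Δ)) := phiF (stpF S) Γ Δ

inductive DerEq {V : Type} : {A C : Fma V} → Der A C → Der A C → Prop
  | refl : DerEq f f
  | symm : DerEq f g → DerEq g f
  | trans : DerEq f g → DerEq g h → DerEq f h
  | compCong : DerEq g g' → DerEq f f' → DerEq (Der.comp g f) (Der.comp g' f')
  | tensCong : DerEq f f' → DerEq g g' → DerEq (Der.tens f g) (Der.tens f' g')
  | compIdL : DerEq (Der.comp Der.id f) f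
  | compIdR : DerEq (Der.comp f Der.id) f
  | compAssoc : DerEq (Der.comp h (Der.comp g f)) (Der.comp (Der.comp h g) f)
  | tensId : DerEq (Der.tens (Der.id (A := A)) (Der.id (A := B))) Der.id
  | tensComp : DerEq (Der.tens (Der.comp g f) (Der.comp k h))
      (Der.comp (Der.tens g k) (Der.tens f h))
  | natLam : DerEq (Der.comp f Der.lam) (Der.comp Der.lam (Der.tens Der.id f))
  | natRho : DerEq (Der.comp Der.rho f) (Der.comp (Der.tens f Der.id) Der.rho)
  | natAlpha : DerEq (Der.comp Der.alpha (Der.tens (Der.tens f g) h))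
      (Der.comp (Der.tens f (Der.tens g h)) Der.alpha)
  | lamRho : DerEq (Der.comp Der.lam Der.rho) (Der.id (A := Fma.unit))
  | skewB : DerEq (Der.comp (Der.tens Der.id Der.lam) (Der.comp Der.alpha (Der.tens Der.rho Der.id)))
      (Der.id (A := Fma.tens A B))
  | skewC : DerEq (Der.comp Der.lam Der.alpha) (Der.tens Der.lam (Der.id (A := B)))
  | skewD : DerEq (Der.comp Der.alpha Der.rho) (Der.tens (Der.id (A := A)) Der.rho)
  | skewE : DerEq
      (Der.comp (Der.tens Der.id Der.alpha) (Der.comp Der.alpha (Der.tens Der.alpha (Der.id (A := D)))))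
      (Der.comp Der.alpha Der.alpha)

inductive CFEq {V : Type} : {S : Stp V} → {Γ : List (Fma V)} → {C : Fma V} → CF S Γ C → CF S Γ C → Prop
  | refl : CFEq f f
  | symm : CFEq f g → CFEq g f
  | trans : CFEq f g → CFEq g h → CFEq f h
  | ufCong : CFEq f g → CFEq (CF.uf f) (CF.uf g)
  | IlCong : CFEq f g → CFEq (CF.Il f) (CF.Il g)
  | tlCong : CFEq f g → CFEq (CF.tl f) (CF.tl g)
  | trCong : CFEq f f' → CFEq g g' → CFEq (CF.tr f g) (CF.tr f' g')
  | axI : CFEq (CF.ax (A := Fma.unit (V := V))) (CF.Il CF.Ir)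
  | axTens : CFEq (CF.ax (A := Fma.tens A B)) (CF.tl (CF.tr CF.ax (CF.uf CF.ax)))
  | trUf : CFEq (CF.tr (CF.uf f) g) (CF.uf (CF.tr f g))
  | trIl : CFEq (CF.tr (CF.Il f) g) (CF.Il (CF.tr f g))
  | trTl : CFEq (CF.tr (CF.tl f) g) (CF.tl (CF.tr f g))

def soundCF {V : Type} {S : Stp V} {Γ : List (Fma V)} {C : Fma V} : CF S Γ C → Der (sem S Γ) C
  | .ax => .id
  | .uf f => (soundCF f).comp (actDer Der.lam _)
  | .Il f => soundCF (S := none) f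
  | .Ir => .id
  | .tl (A := A) (B := B) f => soundCF (S := some A) (Γ := B :: _) f
  | .tr f g => ((soundCF f).tens (soundCF g)).comp (phi _ _ _)

/-!
Soundness sends every generator of `◦≐` to an instance of a skew monoidal law. The generators
`ax` at `I`, `⊗R(IL f, g)` and `⊗R(⊗L f, g)` are identified on the nose. The expansion of `ax` at
`A ⊗ B` is sent to the triangle law `(id ⊗ λ) ∘ α ∘ (ρ ⊗ id) ≐ id`. Permuting `uf` past `⊗R` amounts
to naturality of `phi` in the formula in the stoup, which follows from naturality of `α` and `ρ`,
transported along the functor `(−) ⊗ Γ` given by `actDer`.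
-/

namespace DerEq

variable {V : Type}

local infix:50 " ≐ " => DerEq

instance {A B : Fma V} : Trans (@DerEq V A B) (@DerEq V A B) (@DerEq V A B) := ⟨DerEq.trans⟩

theorem comp_congr_left {A B C : Fma V} {f : Der A B} {g g' : Der B C} (h : g ≐ g') :
    g.comp f ≐ g'.comp f :=
  compCong h refl

theorem comp_congr_right {A B C : Fma V} {f f' : Der A B} {g : Der B C} (h : f ≐ f') :
    g.comp f ≐ g.comp f' :=
  compCong refl h

theorem actDer_congr {A B : Fma V} {f g : Der A B} (h : f ≐ g) : ∀ Γ, actDer f Γ ≐ actDer g Γ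
  | [] => h
  | _ :: Γ => actDer_congr (tensCong h refl) Γ

theorem actDer_id {A : Fma V} : ∀ Γ, actDer (Der.id (A := A)) Γ ≐ Der.id
  | [] => refl
  | _ :: Γ => trans (actDer_congr tensId Γ) (actDer_id Γ)

theorem actDer_comp {A B C : Fma V} (g : Der B C) (f : Der A B) :
    ∀ Γ, actDer (g.comp f) Γ ≐ (actDer g Γ).comp (actDer f Γ)
  | [] => refl
  | _ :: Γ =>
    calc actDer ((g.comp f).tens Der.id) Γ
        ≐ actDer ((g.tens Der.id).comp (f.tens Der.id)) Γ :=
          actDer_congr (trans (tensCong refl (symm compIdL)) tensComp) Γ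
      _ ≐ _ := actDer_comp _ _ Γ

theorem actDer_square {A A' B B' : Fma V} {f : Der A B} {g : Der B B'} {f' : Der A A'}
    {g' : Der A' B'} (h : g.comp f ≐ g'.comp f') (Γ : List (Fma V)) :
    (actDer g Γ).comp (actDer f Γ) ≐ (actDer g' Γ).comp (actDer f' Γ) :=
  calc (actDer g Γ).comp (actDer f Γ)
      ≐ actDer (g.comp f) Γ := symm (actDer_comp g f Γ)
    _ ≐ actDer (g'.comp f') Γ := actDer_congr h Γ
    _ ≐ _ := actDer_comp g' f' Γ

theorem psi_natural {A A' B B' : Fma V} (h : Der A A') (k : Der B B') :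
    ∀ Δ, (psi A' B' Δ).comp (actDer (h.tens k) Δ) ≐ (h.tens (actDer k Δ)).comp (psi A B Δ)
  | [] => trans compIdL (symm compIdR)
  | D :: Δ =>
    calc ((psi A' (B'.tens D) Δ).comp (actDer Der.alpha Δ)).comp
          (actDer ((h.tens k).tens Der.id) Δ)
        ≐ (psi A' (B'.tens D) Δ).comp
            ((actDer Der.alpha Δ).comp (actDer ((h.tens k).tens Der.id) Δ)) := symm compAssoc
      _ ≐ (psi A' (B'.tens D) Δ).comp
            ((actDer (h.tens (k.tens Der.id)) Δ).comp (actDer Der.alpha Δ)) :=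
          comp_congr_right (actDer_square natAlpha Δ)
      _ ≐ ((psi A' (B'.tens D) Δ).comp (actDer (h.tens (k.tens Der.id)) Δ)).comp
            (actDer Der.alpha Δ) := compAssoc
      _ ≐ ((h.tens (actDer (k.tens Der.id) Δ)).comp (psi A (B.tens D) Δ)).comp
            (actDer Der.alpha Δ) := comp_congr_left (psi_natural h (k.tens Der.id) Δ)
      _ ≐ _ := symm compAssoc

theorem phiF_natural {A B : Fma V} (h : Der A B) :
    ∀ Γ Δ, (phiF B Γ Δ).comp (actDer h (Γ ++ Δ)) ≐ ((actDer h Γ).tens Der.id).comp (phiF A Γ Δ)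
  | [], Δ =>
    calc ((psi B Fma.unit Δ).comp (actDer Der.rho Δ)).comp (actDer h Δ)
        ≐ (psi B Fma.unit Δ).comp ((actDer Der.rho Δ).comp (actDer h Δ)) := symm compAssoc
      _ ≐ (psi B Fma.unit Δ).comp
            ((actDer (h.tens Der.id) Δ).comp (actDer Der.rho Δ)) :=
          comp_congr_right (actDer_square natRho Δ)
      _ ≐ ((psi B Fma.unit Δ).comp (actDer (h.tens Der.id) Δ)).comp (actDer Der.rho Δ) :=
          compAssoc
      _ ≐ ((h.tens Der.id).comp (psi A Fma.unit Δ)).comp (actDer Der.rho Δ) :=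
          comp_congr_left (trans (psi_natural h Der.id Δ)
            (comp_congr_left (tensCong refl (actDer_id Δ))))
      _ ≐ _ := symm compAssoc
  | _ :: Γ, Δ => phiF_natural (h.tens Der.id) Γ Δ

theorem soundCF_tl_tr_ax_uf_ax {A B : Fma V} :
    soundCF (CF.tl (CF.tr CF.ax (CF.uf CF.ax)) : CF (some (A.tens B)) [] (A.tens B)) ≐ Der.id :=
  calc (Der.id.tens (Der.id.comp Der.lam)).comp ((Der.id.comp Der.alpha).comp (Der.rho.tens Der.id))
      ≐ (Der.id.tens Der.lam).comp (Der.alpha.comp (Der.rho.tens Der.id)) :=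
        compCong (tensCong refl compIdL) (comp_congr_left compIdL)
    _ ≐ Der.id := skewB

theorem soundCF_tr_uf {A B C : Fma V} {Γ Δ : List (Fma V)} (f : CF (some A) Γ B)
    (g : CF none Δ C) :
    soundCF (CF.tr (CF.uf f) g) ≐ soundCF (CF.uf (CF.tr f g)) :=
  calc (((soundCF f).comp (actDer Der.lam Γ)).tens (soundCF g)).comp (phiF (Fma.unit.tens A) Γ Δ)
      ≐ (((soundCF f).tens (soundCF g)).comp ((actDer Der.lam Γ).tens Der.id)).comp
          (phiF (Fma.unit.tens A) Γ Δ) :=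
        comp_congr_left (trans (tensCong refl (symm compIdR)) tensComp)
    _ ≐ ((soundCF f).tens (soundCF g)).comp
          (((actDer Der.lam Γ).tens Der.id).comp (phiF (Fma.unit.tens A) Γ Δ)) :=
        symm compAssoc
    _ ≐ ((soundCF f).tens (soundCF g)).comp ((phiF A Γ Δ).comp (actDer Der.lam (Γ ++ Δ))) :=
        comp_congr_right (symm (phiF_natural Der.lam Γ Δ))
    _ ≐ _ := compAssoc

end DerEq

/-- The soundness translation respects the equivalences: `f ◦≐ g` implies
`sound f ≐ sound g`. -/
theorem statement7 (V : Type) (S : Stp V) (Γ : List (Fma V)) (C : Fma V)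
    (f g : CF S Γ C) (h : CFEq f g) : DerEq (soundCF f) (soundCF g) := by
  induction h with
  | refl => exact .refl
  | symm _ ih => exact ih.symm
  | trans _ _ ih₁ ih₂ => exact ih₁.trans ih₂
  | ufCong _ ih => exact DerEq.comp_congr_left ih
  | IlCong _ ih => exact ih
  | tlCong _ ih => exact ih
  | trCong _ _ ih₁ ih₂ => exact DerEq.comp_congr_left (.tensCong ih₁ ih₂)
  | axI => exact .refl
  | axTens => exact DerEq.soundCF_tl_tr_ax_uf_ax.symm
  | trUf => exact DerEq.soundCF_tr_uf _ _
  | trIl => exact .refl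
  | trTl => exact .refl
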